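/- Let M = {M_1, M_2} be a binary MMDP, M^p = {M_1^p, M_2^p} its preprocessed MMDP, and M^I any informative MDP of M (with transition kernel δ^I = γ·δ_1^p + (1−γ)·δ_2^p for some γ ∈ (0,1)). A policy π achieves asymptotic perfect detection for M if and only if P_I^π({h ∈ H : inf(h) ∩ ISA^p ≠ ∅}) = 1, where P_I^π is the probability measure on the space of infinite histories induced by the kernel δ^I and the policy π from the initial state s_init. -/

import Mathlib

open Finset Filter

/-- A history of length `t` of an MDP with states `S` and actions `A`:
a sequence of `t+1` states and `t` actions `(s₀, a₀, s₁, …, a_{t-1}, s_t)`. -/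
abbrev Hist (S A : Type) (t : ℕ) : Type := (Fin (t + 1) → S) × (Fin t → A)

/-- The last state of a history. -/
def lastState {S A : Type} {t : ℕ} (h : Hist S A t) : S := h.1 (Fin.last t)

/-- The length-`τ` prefix of a history of length `t` (for `τ < t`). -/
def prefixH {S A : Type} {t : ℕ} (h : Hist S A t) (τ : Fin t) : Hist S A τ.val :=
  (fun i => h.1 (Fin.castLE (Nat.succ_le_succ τ.isLt.le) i),
   fun i => h.2 (Fin.castLE τ.isLt.le i))

/-- A history-dependent randomized policy over the available-action map `act`:
for every time `t` and history `h` of length `t` it gives a probability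
distribution over the actions available at the last state of `h`. -/
structure Policy (S A : Type) [Fintype S] [Fintype A] (act : S → Finset A) where
  p : (t : ℕ) → Hist S A t → A → ℝ
  nonneg : ∀ (t : ℕ) (h : Hist S A t) (a : A), 0 ≤ p t h a
  sum_one : ∀ (t : ℕ) (h : Hist S A t), ∑ a ∈ act (lastState h), p t h a = 1
  zero_off : ∀ (t : ℕ) (h : Hist S A t), ∀ a ∉ act (lastState h), p t h a = 0

/-- The probability `P^π(h)` of a history `h` of length `t` under the transition kernel `δ`
    and (the underlying map `πf` of) a policy, starting from the initial state `init`. -/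
noncomputable def histProb {S A : Type} [Fintype S] [Fintype A] [DecidableEq S]
    (init : S) (δ : S → A → S → ℝ)
    (πf : (t : ℕ) → Hist S A t → A → ℝ) (t : ℕ) (h : Hist S A t) : ℝ :=
  (if h.1 0 = init then (1 : ℝ) else 0) *
    ∏ τ : Fin t,
      πf τ.val (prefixH h τ) (h.2 τ) * δ (h.1 τ.castSucc) (h.2 τ) (h.1 τ.succ)

/-- The Bhattacharyya coefficient at step `t` between the history distributions induced by
the kernels `δ1` and `δ2` under the policy map `πf`:
`B(t,π) = Σ_{h_t} √(P₁^π(h_t)·P₂^π(h_t))`. -/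
noncomputable def BC {S A : Type} [Fintype S] [Fintype A] [DecidableEq S]
    (init : S) (δ1 δ2 : S → A → S → ℝ)
    (πf : (t : ℕ) → Hist S A t → A → ℝ) (t : ℕ) : ℝ :=
  ∑ h : Hist S A t,
    Real.sqrt (histProb init δ1 πf t h * histProb init δ2 πf t h)

/-- A binary MMDP: two MDPs sharing the state space `S`, available actions `act`,
and initial state `init`, with transition kernels `δ 0` and `δ 1`. -/
structure BinMMDP (S A : Type) [Fintype S] [Fintype A] where
  act : S → Finset A
  act_nonempty : ∀ s, (act s).Nonempty
  init : S
  δ : Fin 2 → S → A → S → ℝ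
  δ_nonneg : ∀ i s a s', 0 ≤ δ i s a s'
  δ_sum : ∀ i s, ∀ a ∈ act s, ∑ s', δ i s a s' = 1

open MeasureTheory in
/-- The space of infinite histories (trajectories) `(s₀, a₀, s₁, a₁, …)`, recorded as the
sequence of state-action pairs, equipped with the product σ-algebra of the discrete
σ-algebras (so that the σ-algebra is generated by the cylinder sets). -/
def Traj (S A : Type) : Type := ℕ → S × A

instance (S A : Type) : MeasurableSpace (Traj S A) :=
  @MeasurableSpace.pi ℕ (fun _ => S × A) (fun _ => ⊤)

/-- The cylinder set of infinite histories extending the finite history `h`. -/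
def Cyl {S A : Type} {t : ℕ} (h : Hist S A t) : Set (Traj S A) :=
  {ω | (∀ i : Fin (t + 1), (ω i.val).1 = h.1 i) ∧ ∀ i : Fin t, (ω i.val).2 = h.2 i}

/-- `inf(ω)`: the set of state-action pairs occurring infinitely often in the infinite
history `ω`. -/
def InfOften {S A : Type} (ω : Traj S A) : Set (S × A) :=
  {p | {n : ℕ | ω n = p}.Infinite}

/-- `P` is the probability measure on infinite histories induced from the initial state
`init` by the transition kernel `δ` and the policy map `πf` (the Ionescu–Tulcea measure):
it is a probability measure whose value on every cylinder set is the probability of the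
corresponding finite history. -/
def IsInduced {S A : Type} [Fintype S] [Fintype A] [DecidableEq S]
    (init : S) (δ : S → A → S → ℝ) (πf : (t : ℕ) → Hist S A t → A → ℝ)
    (P : MeasureTheory.Measure (Traj S A)) : Prop :=
  MeasureTheory.IsProbabilityMeasure P ∧
    ∀ (t : ℕ) (h : Hist S A t),
      P (Cyl h) = ENNReal.ofReal (histProb init δ πf t h)

section Preprocessing

open scoped Classical

variable {S A : Type}

/-- A state-action pair `(s,a)` is revealing for the pair of kernels `δ 0, δ 1` if the
supports of `δ 0 (·|s,a)` and `δ 1 (·|s,a)` are disjoint. -/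
def RevealingPair (δ : Fin 2 → S → A → S → ℝ) (s : S) (a : A) : Prop :=
  ∀ s' : S, ¬(0 < δ 0 s a s' ∧ 0 < δ 1 s a s')

/-- A state-action pair `(s,a)` is informative for the pair of kernels `δ 0, δ 1` if
`δ 0 (·|s,a) ≠ δ 1 (·|s,a)` and their supports intersect. -/
def InformativePair (δ : Fin 2 → S → A → S → ℝ) (s : S) (a : A) : Prop :=
  δ 0 s a ≠ δ 1 s a ∧ ∃ s' : S, 0 < δ 0 s a s' ∧ 0 < δ 1 s a s'

/-- A state is revealing if some available action at it forms a revealing pair. -/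
def RevealingState (act : S → Finset A) (δ : Fin 2 → S → A → S → ℝ) (s : S) : Prop :=
  ∃ a ∈ act s, RevealingPair δ s a

variable [Fintype S] [Fintype A] [DecidableEq S] [DecidableEq A]

/-- Available actions of the preprocessed MMDP.  The state space is `S ⊕ Fin 2`, where
`Sum.inr i` is the terminal state `⊥_{i+1}`; at a revealing state only the chosen revealing
action `ra s` remains, at the terminal state `⊥_j` only the fresh action `a^{⊥_j}`
(encoded `Sum.inr j`) is available, and all other actions are kept. -/
noncomputable def actp (act : S → Finset A) (δ : Fin 2 → S → A → S → ℝ) (ra : S → A) :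
    S ⊕ Fin 2 → Finset (A ⊕ Fin 2)
  | Sum.inl s =>
      if RevealingState act δ s then {Sum.inl (ra s)} else (act s).image Sum.inl
  | Sum.inr j => {Sum.inr j}

/-- The transition kernel `δ_i^p` of the `i`-th preprocessed MDP `M_i^p`:
the terminal states `⊥_j = Sum.inr j` are absorbing; a revealing pair `(s,a)` moves to
`⊥_i` with probability one; an informative pair `(s,a)` keeps the probabilities of
successors in the common support and redirects the remaining mass of `δ i (·|s,a)` to
`⊥_i`; all other transitions are unchanged. -/
noncomputable def δp (δ : Fin 2 → S → A → S → ℝ) (i : Fin 2) :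
    S ⊕ Fin 2 → A ⊕ Fin 2 → S ⊕ Fin 2 → ℝ
  | Sum.inr j, _, s' => if s' = Sum.inr j then 1 else 0
  | Sum.inl s, Sum.inl a, Sum.inl s' =>
      if RevealingPair δ s a then 0
      else if InformativePair δ s a then
        (if 0 < δ (1 - i) s a s' then δ i s a s' else 0)
      else δ i s a s'
  | Sum.inl s, Sum.inl a, Sum.inr j =>
      if RevealingPair δ s a then (if j = i then 1 else 0)
      else if InformativePair δ s a then
        (if j = i then
          ∑ s' ∈ Finset.univ.filter (fun s' : S => ¬ 0 < δ (1 - i) s a s'), δ i s a s'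
        else 0)
      else 0
  | Sum.inl _, Sum.inr _, _ => 0

/-- `ISA^p`: the set of state-action pairs of the preprocessed MMDP that are informative
for the preprocessed MMDP, together with the two terminal pairs `(⊥_j, a^{⊥_j})`. -/
def ISAp (act : S → Finset A) (δ : Fin 2 → S → A → S → ℝ) (ra : S → A) :
    Set ((S ⊕ Fin 2) × (A ⊕ Fin 2)) :=
  {x | x.2 ∈ actp act δ ra x.1 ∧ InformativePair (fun i => δp δ i) x.1 x.2}
    ∪ {x | ∃ j : Fin 2, x = (Sum.inr j, Sum.inr j)}

end Preprocessing

/-!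
Write `ν = √(P₁ P₂)` for the history weights of the kernel `√(δ₁ᵖ δ₂ᵖ)` and `Q` for those of the
informative kernel `δᴵ`, so that `B(t) = Σ ν`. At each step `ν` is multiplied by `π √(δ₁ᵖ δ₂ᵖ)`
and `Q` by `π δᴵ`: through a pair that is not informative for `Mᵖ` the first factor is at most
the second (equal to it when the two rows agree), through an informative pair at most
`(2√(γ(1-γ)))⁻¹` times it, and summed over the next state an informative step multiplies `ν` by
at most some `c < 1`. Hence `B(t) ≤ (2√(γ(1-γ)))⁻ᵏ Q(fewer than k informative steps, ν > 0) + cᵏ`;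
since `ν > 0` rules out the absorbing states, `B(t) → 0` when `Pᴵ`-almost every trajectory visits
`ISAᵖ` infinitely often. Conversely, off a `Pᴵ`-null set a trajectory visiting `ISAᵖ` finitely
often never enters `⊥₁, ⊥₂` and eventually uses only pairs whose two rows agree; from then on
`ν / Q` stays at a positive value, which bounds `B(t)` below by a positive multiple of the
probability of such trajectories.
-/

open Finset Filter MeasureTheory Topology

namespace Hist

variable {S A : Type} {t : ℕ}

def snoc (h : Hist S A t) (a : A) (s : S) : Hist S A (t + 1) :=
  (Fin.snoc h.1 s, Fin.snoc h.2 a)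

lemma prefixH_snoc_castSucc (h : Hist S A t) (a : A) (s : S) (τ : Fin t) :
    prefixH (h.snoc a s) τ.castSucc = prefixH h τ := by
  ext i
  · exact Fin.snoc_castSucc (α := fun _ => S) s h.1 (Fin.castLE _ i)
  · exact Fin.snoc_castSucc (α := fun _ => A) a h.2 (Fin.castLE _ i)

lemma prefixH_snoc_last (h : Hist S A t) (a : A) (s : S) :
    prefixH (h.snoc a s) (Fin.last t) = h := by
  ext i
  · exact Fin.snoc_castSucc (α := fun _ => S) s h.1 i
  · exact Fin.snoc_castSucc (α := fun _ => A) a h.2 i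

def snocEquiv (S A : Type) (t : ℕ) : Hist S A t × A × S ≃ Hist S A (t + 1) where
  toFun x := x.1.snoc x.2.1 x.2.2
  invFun h := ((Fin.init h.1, Fin.init h.2), h.2 (Fin.last t), h.1 (Fin.last (t + 1)))
  left_inv x := by simp [snoc]
  right_inv h := by simp [snoc]

lemma sum_univ_succ [Fintype S] [Fintype A] {M : Type*} [AddCommMonoid M]
    (f : Hist S A (t + 1) → M) :
    ∑ h, f h = ∑ h : Hist S A t, ∑ a, ∑ s, f (h.snoc a s) := by
  rw [← (snocEquiv S A t).sum_comp, Fintype.sum_prod_type]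
  simp only [Fintype.sum_prod_type]
  rfl

open scoped Classical in
noncomputable def count (P : S → A → Prop) (h : Hist S A t) : ℕ :=
  ∑ τ : Fin t, if P (h.1 τ.castSucc) (h.2 τ) then 1 else 0

open scoped Classical in
lemma count_snoc (P : S → A → Prop) (h : Hist S A t) (a : A) (s : S) :
    (h.snoc a s).count P = h.count P + if P (lastState h) a then 1 else 0 := by
  rw [count, Fin.sum_univ_castSucc]
  simp [snoc, lastState, count]
  congr

end Hist

namespace Traj

variable {S A : Type} (ω : Traj S A)

def take (t : ℕ) : Hist S A t := (fun i => (ω i).1, fun i => (ω i).2)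

lemma take_succ (t : ℕ) : ω.take (t + 1) = (ω.take t).snoc (ω t).2 (ω (t + 1)).1 := by
  ext i
  · refine Fin.lastCases ?_ (fun j => ?_) i <;> simp [take, Hist.snoc]
  · refine Fin.lastCases ?_ (fun j => ?_) i <;> simp [take, Hist.snoc]

@[simp] lemma lastState_take (t : ℕ) : lastState (ω.take t) = (ω t).1 := rfl

lemma mem_Cyl_iff {t : ℕ} (h : Hist S A t) : ω ∈ Cyl h ↔ ω.take t = h := by
  simp [Cyl, take, Prod.ext_iff, funext_iff]

open scoped Classical in
lemma count_take (P : S → A → Prop) (t : ℕ) :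
    (ω.take t).count P = Nat.count (fun n => P (ω n).1 (ω n).2) t := by
  rw [Hist.count, Nat.count_eq_card_filter_range, card_filter,
    ← Fin.sum_univ_eq_sum_range (fun n => if P (ω n).1 (ω n).2 then 1 else 0)]
  rfl

lemma eventually_notMem_of_not_nonempty_infOften_inter [Finite S] [Finite A] {K : Set (S × A)}
    (hK : ¬(InfOften ω ∩ K).Nonempty) : ∀ᶠ n in atTop, ω n ∉ K := by
  have hfin : ∀ p, ∀ᶠ n in atTop, p ∈ K → ω n ≠ p := by
    intro p
    by_cases hp : p ∈ K
    · have : ¬{n | ω n = p}.Infinite := fun hinf => hK ⟨p, hinf, hp⟩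
      rw [← Nat.frequently_atTop_iff_infinite, not_frequently] at this
      exact this.mono fun n hn _ => hn
    · exact .of_forall fun n h => absurd h hp
  filter_upwards [eventually_all.2 hfin] with n hn hmem using hn _ hmem rfl

end Traj

section HistProb

variable {S A : Type} [Fintype S] [Fintype A] [DecidableEq S] (init : S) (d : S → A → S → ℝ)
  (πf : (t : ℕ) → Hist S A t → A → ℝ)

lemma histProb_snoc {t : ℕ} (h : Hist S A t) (a : A) (s : S) :
    histProb init d πf (t + 1) (h.snoc a s)
      = histProb init d πf t h * (πf t h a * d (lastState h) a s) := by
  simp only [histProb, Fin.prod_univ_castSucc, Hist.prefixH_snoc_castSucc,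
    Hist.prefixH_snoc_last]
  simp [Hist.snoc, lastState, Fin.succ_castSucc, -Fin.castSucc_succ]

lemma histProb_zero (h : Hist S A 0) :
    histProb init d πf 0 h = if h.1 0 = init then 1 else 0 := by
  simp [histProb]

lemma histProb_nonneg (hd : ∀ s a s', 0 ≤ d s a s') (hπ : ∀ t h a, 0 ≤ πf t h a)
    {t : ℕ} (h : Hist S A t) : 0 ≤ histProb init d πf t h :=
  mul_nonneg (by positivity) (prod_nonneg fun _ _ => mul_nonneg (hπ ..) (hd ..))

lemma sum_histProb_zero : ∑ h : Hist S A 0, histProb init d πf 0 h = 1 := by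
  rw [Fintype.sum_prod_type, ← (Equiv.funUnique (Fin 1) S).symm.sum_comp]
  simp only [histProb_zero]
  simp

variable (ω : Traj S A)

lemma histProb_take_succ (t : ℕ) :
    histProb init d πf (t + 1) (ω.take (t + 1)) = histProb init d πf t (ω.take t)
      * (πf t (ω.take t) (ω t).2 * d (ω t).1 (ω t).2 (ω (t + 1)).1) := by
  rw [Traj.take_succ, histProb_snoc, Traj.lastState_take]

lemma forall_histProb_take_ne_zero_iff :
    (∀ t, histProb init d πf t (ω.take t) ≠ 0) ↔ (ω 0).1 = init ∧
      ∀ n, πf n (ω.take n) (ω n).2 ≠ 0 ∧ d (ω n).1 (ω n).2 (ω (n + 1)).1 ≠ 0 := by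
  refine ⟨fun h => ⟨?_, fun n => ?_⟩, fun ⟨h0, hstep⟩ t => ?_⟩
  · simpa [histProb_zero, Traj.take] using h 0
  · have := h (n + 1)
    rw [histProb_take_succ] at this
    exact mul_ne_zero_iff.1 (right_ne_zero_of_mul this)
  · induction t with
    | zero => simpa [histProb_zero, Traj.take] using h0
    | succ t ih =>
      rw [histProb_take_succ]
      exact mul_ne_zero ih (mul_ne_zero (hstep t).1 (hstep t).2)

lemma mem_of_forall_histProb_take_ne_zero {L : Set S}
    (hL : ∀ s ∈ L, ∀ a, ∀ s' ∉ L, d s a s' = 0)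
    (hω : ∀ t, histProb init d πf t (ω.take t) ≠ 0) {n : ℕ} (hn : (ω n).1 ∈ L) :
    ∀ m, n ≤ m → (ω m).1 ∈ L := by
  intro m hm
  induction m, hm using Nat.le_induction with
  | base => exact hn
  | succ m _ ih =>
    by_contra hout
    exact ((forall_histProb_take_ne_zero_iff init d πf ω).1 hω).2 m |>.2 (hL _ ih _ _ hout)

end HistProb

namespace Policy

variable {S A : Type} [Fintype S] [Fintype A] {act : S → Finset A} (π : Policy S A act)

lemma sum_univ (t : ℕ) (h : Hist S A t) : ∑ a, π.p t h a = 1 := by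
  rw [← π.sum_one t h]
  exact (sum_subset (subset_univ _) fun a _ ha => π.zero_off t h a ha).symm

lemma mem_act_of_ne_zero {t : ℕ} {h : Hist S A t} {a : A} (ha : π.p t h a ≠ 0) :
    a ∈ act (lastState h) := by
  by_contra hna
  exact ha (π.zero_off t h a hna)

end Policy

section Measurability

variable {S A : Type}

lemma Traj.measurableSet_apply_mem (n : ℕ) (B : Set (S × A)) :
    MeasurableSet {ω : Traj S A | ω n ∈ B} :=
  @measurable_pi_apply ℕ (fun _ => S × A) (fun _ => ⊤) n B MeasurableSpace.measurableSet_top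

lemma measurableSet_Cyl {t : ℕ} (h : Hist S A t) : MeasurableSet (Cyl h) := by
  simp only [Cyl, Set.ofPred_and, Set.ofPred_forall]
  exact (MeasurableSet.iInter fun i : Fin (t + 1) =>
      Traj.measurableSet_apply_mem i {p | p.1 = h.1 i}).inter
    (MeasurableSet.iInter fun i : Fin t => Traj.measurableSet_apply_mem i {p | p.2 = h.2 i})

lemma measurableSet_setOf_take [Finite S] [Finite A] {t : ℕ} (p : Hist S A t → Prop) :
    MeasurableSet {ω : Traj S A | p (ω.take t)} := by
  have hp : {ω : Traj S A | p (ω.take t)} = ⋃ h ∈ {h | p h}, Cyl h := by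
    ext ω
    simp [Traj.mem_Cyl_iff]
  rw [hp]
  exact .biUnion (Set.to_countable _) fun h _ => measurableSet_Cyl h

lemma measure_setOf_take_eq_sum [Fintype S] [Fintype A] (μ : Measure (Traj S A)) {t : ℕ}
    (p : Hist S A t → Prop) [DecidablePred p] :
    μ {ω | p (ω.take t)} = ∑ h ∈ univ.filter p, μ (Cyl h) := by
  have hp : {ω : Traj S A | p (ω.take t)} = ⋃ h ∈ univ.filter p, Cyl h := by
    ext ω
    simp [Traj.mem_Cyl_iff]
  rw [hp, measure_biUnion_finset _ fun h _ => measurableSet_Cyl h]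
  intro h _ h' _ hne
  exact Set.disjoint_left.2 fun ω hω hω' =>
    hne (((Traj.mem_Cyl_iff ω h).1 hω).symm.trans ((Traj.mem_Cyl_iff ω h').1 hω'))

lemma measurableSet_setOf_infOften_inter_nonempty [Finite S] [Finite A] (K : Set (S × A)) :
    MeasurableSet {ω : Traj S A | (InfOften ω ∩ K).Nonempty} := by
  have hK : {ω : Traj S A | (InfOften ω ∩ K).Nonempty}
      = ⋃ p ∈ K, ⋂ N : ℕ, ⋃ n ≥ N, {ω : Traj S A | ω n ∈ ({p} : Set (S × A))} := by
    ext ω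
    simp only [Set.mem_ofPred_eq, Set.mem_iUnion, Set.mem_iInter, Set.mem_singleton_iff,
      Set.Nonempty, Set.mem_inter_iff, InfOften, ← Nat.frequently_atTop_iff_infinite,
      frequently_atTop, exists_prop, ge_iff_le]
    exact exists_congr fun p => and_comm
  rw [hK]
  exact .biUnion (Set.to_countable K) fun p _ => .iInter fun N => .iUnion fun n =>
    .iUnion fun _ => Traj.measurableSet_apply_mem n _

end Measurability

section Induced

variable {S A : Type} [Fintype S] [Fintype A] [DecidableEq S] {init : S} {d : S → A → S → ℝ}
  {πf : (t : ℕ) → Hist S A t → A → ℝ} {P : Measure (Traj S A)}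

lemma IsInduced.measure_setOf_take (hP : IsInduced init d πf P) {t : ℕ}
    (p : Hist S A t → Prop) [DecidablePred p] :
    P {ω | p (ω.take t)} = ∑ h ∈ univ.filter p, ENNReal.ofReal (histProb init d πf t h) := by
  rw [measure_setOf_take_eq_sum]
  exact sum_congr rfl fun h _ => hP.2 t h

lemma IsInduced.toReal_measure_setOf_take (hP : IsInduced init d πf P)
    (hd : ∀ s a s', 0 ≤ d s a s') (hπ : ∀ t h a, 0 ≤ πf t h a) {t : ℕ}
    (p : Hist S A t → Prop) [DecidablePred p] :
    (P {ω | p (ω.take t)}).toReal = ∑ h ∈ univ.filter p, histProb init d πf t h := by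
  rw [hP.measure_setOf_take, ← ENNReal.ofReal_sum_of_nonneg fun h _ =>
    histProb_nonneg _ _ _ hd hπ h,
    ENNReal.toReal_ofReal (sum_nonneg fun h _ => histProb_nonneg _ _ _ hd hπ h)]

open scoped Classical in
lemma IsInduced.measure_setOf_exists_histProb_take_eq_zero (hP : IsInduced init d πf P) :
    P {ω | ∃ t, histProb init d πf t (ω.take t) = 0} = 0 := by
  rw [Set.ofPred_exists]
  refine measure_iUnion_null fun t => ?_
  rw [hP.measure_setOf_take fun h => histProb init d πf t h = 0]
  exact sum_eq_zero fun h hh => by rw [(mem_filter.1 hh).2, ENNReal.ofReal_zero]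

end Induced

section AMGM

lemma Real.sqrt_mul_le_add_div_two {x y : ℝ} (hx : 0 ≤ x) (hy : 0 ≤ y) :
    √(x * y) ≤ (x + y) / 2 := by
  rw [Real.sqrt_le_iff]
  constructor <;> nlinarith [sq_nonneg (x - y)]

lemma Real.sqrt_mul_lt_add_div_two {x y : ℝ} (hx : 0 ≤ x) (hy : 0 ≤ y) (hxy : x ≠ y) :
    √(x * y) < (x + y) / 2 := by
  have : 0 < (x - y) ^ 2 := pow_two_pos_of_ne_zero (sub_ne_zero.2 hxy)
  rw [Real.sqrt_lt' (lt_of_le_of_ne (by positivity) fun h => hxy (by linarith))]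
  nlinarith

lemma Finset.sum_sqrt_mul_le_one {ι : Type*} [Fintype ι] {p q : ι → ℝ} (hp : ∀ i, 0 ≤ p i)
    (hq : ∀ i, 0 ≤ q i) (hp1 : ∑ i, p i = 1) (hq1 : ∑ i, q i = 1) :
    ∑ i, √(p i * q i) ≤ 1 := by
  calc ∑ i, √(p i * q i) ≤ ∑ i, (p i + q i) / 2 :=
        sum_le_sum fun i _ => Real.sqrt_mul_le_add_div_two (hp i) (hq i)
    _ = 1 := by rw [← sum_div, sum_add_distrib, hp1, hq1]; norm_num

lemma Finset.sum_sqrt_mul_lt_one {ι : Type*} [Fintype ι] {p q : ι → ℝ} (hp : ∀ i, 0 ≤ p i)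
    (hq : ∀ i, 0 ≤ q i) (hp1 : ∑ i, p i = 1) (hq1 : ∑ i, q i = 1) (hpq : p ≠ q) :
    ∑ i, √(p i * q i) < 1 := by
  obtain ⟨i, hi⟩ := Function.ne_iff.1 hpq
  calc ∑ i, √(p i * q i) < ∑ i, (p i + q i) / 2 :=
        sum_lt_sum (fun i _ => Real.sqrt_mul_le_add_div_two (hp i) (hq i))
          ⟨i, mem_univ i, Real.sqrt_mul_lt_add_div_two (hp i) (hq i) hi⟩
    _ = 1 := by rw [← sum_div, sum_add_distrib, hp1, hq1]; norm_num

lemma one_le_inv_two_mul_sqrt {γ : ℝ} (hγ0 : 0 < γ) (hγ1 : γ < 1) :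
    1 ≤ (2 * √(γ * (1 - γ)))⁻¹ := by
  have hγ : 0 < γ * (1 - γ) := mul_pos hγ0 (by linarith)
  rw [one_le_inv₀ (by positivity)]
  nlinarith [Real.sq_sqrt hγ.le, Real.sqrt_nonneg (γ * (1 - γ)), sq_nonneg (2 * γ - 1)]

end AMGM

lemma tendsto_zero_of_forall_le_mul_add {f a b : ℕ → ℝ} {x : ℕ → ℕ → ℝ} (hf : ∀ t, 0 ≤ f t)
    (hb : Tendsto b atTop (𝓝 0)) (hx : ∀ k, Tendsto (x k) atTop (𝓝 0))
    (hle : ∀ k t, f t ≤ a k * x k t + b k) : Tendsto f atTop (𝓝 0) := by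
  refine tendsto_order.2 ⟨fun ε hε => .of_forall fun t => hε.trans_le (hf t), fun ε hε => ?_⟩
  obtain ⟨k, hk⟩ := (hb.eventually (gt_mem_nhds (half_pos hε))).exists
  have hax : Tendsto (fun t => a k * x k t) atTop (𝓝 0) := by
    simpa using (hx k).const_mul (a k)
  filter_upwards [hax.eventually (gt_mem_nhds (half_pos hε))] with t ht
  linarith [hle k t]

section TwoKernels

variable {S A : Type} (d : Fin 2 → S → A → S → ℝ)

noncomputable def geomKer : S → A → S → ℝ := fun s a s' => √(d 0 s a s' * d 1 s a s')

def mixKer (γ : ℝ) : S → A → S → ℝ := fun s a s' => γ * d 0 s a s' + (1 - γ) * d 1 s a s'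

variable {d}

lemma geomKer_nonneg (s : S) (a : A) (s' : S) : 0 ≤ geomKer d s a s' := Real.sqrt_nonneg _

lemma geomKer_mul_self (hd : ∀ i s a s', 0 ≤ d i s a s') (s : S) (a : A) (s' : S) :
    geomKer d s a s' * geomKer d s a s' = d 0 s a s' * d 1 s a s' :=
  Real.mul_self_sqrt (mul_nonneg (hd ..) (hd ..))

lemma mixKer_nonneg (hd : ∀ i s a s', 0 ≤ d i s a s') {γ : ℝ} (hγ0 : 0 ≤ γ) (hγ1 : γ ≤ 1)
    (s : S) (a : A) (s' : S) : 0 ≤ mixKer d γ s a s' := by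
  have := hd 0 s a s'
  have := hd 1 s a s'
  have : 0 ≤ 1 - γ := by linarith
  unfold mixKer
  positivity

lemma geomKer_eq_mixKer_of_eq (hd : ∀ i s a s', 0 ≤ d i s a s') (γ : ℝ) {s : S} {a : A}
    (h : d 0 s a = d 1 s a) : geomKer d s a = mixKer d γ s a := by
  ext s'
  simp only [geomKer, mixKer, ← h, Real.sqrt_mul_self (hd 0 s a s')]
  ring

lemma geomKer_le_mixKer_of_not_informativePair (hd : ∀ i s a s', 0 ≤ d i s a s') {γ : ℝ}
    (hγ0 : 0 ≤ γ) (hγ1 : γ ≤ 1) {s : S} {a : A} (h : ¬InformativePair d s a) (s' : S) :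
    geomKer d s a s' ≤ mixKer d γ s a s' := by
  by_cases hrows : d 0 s a = d 1 s a
  · rw [geomKer_eq_mixKer_of_eq hd γ hrows]
  · have hzero : d 0 s a s' * d 1 s a s' = 0 := by
      by_contra hne
      exact h ⟨hrows, s', (hd 0 s a s').lt_of_ne (left_ne_zero_of_mul hne).symm,
        (hd 1 s a s').lt_of_ne (right_ne_zero_of_mul hne).symm⟩
    rw [geomKer, hzero, Real.sqrt_zero]
    exact mixKer_nonneg hd hγ0 hγ1 s a s'

lemma geomKer_le_mul_mixKer (hd : ∀ i s a s', 0 ≤ d i s a s') {γ : ℝ} (hγ0 : 0 < γ)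
    (hγ1 : γ < 1) (s : S) (a : A) (s' : S) :
    geomKer d s a s' ≤ (2 * √(γ * (1 - γ)))⁻¹ * mixKer d γ s a s' := by
  have hx := hd 0 s a s'
  have hy := hd 1 s a s'
  have hγ : 0 < 1 - γ := by linarith
  rw [le_inv_mul_iff₀ (by positivity), geomKer, mixKer, mul_assoc,
    ← Real.sqrt_mul (by positivity), show γ * (1 - γ) * (d 0 s a s' * d 1 s a s')
      = γ * d 0 s a s' * ((1 - γ) * d 1 s a s') by ring]
  linarith [Real.sqrt_mul_le_add_div_two (mul_nonneg hγ0.le hx) (mul_nonneg hγ.le hy)]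

open scoped Classical in
lemma geomKer_le_pow_mul_mixKer (hd : ∀ i s a s', 0 ≤ d i s a s') {γ : ℝ} (hγ0 : 0 < γ)
    (hγ1 : γ < 1) (s : S) (a : A) (s' : S) :
    geomKer d s a s' ≤ (2 * √(γ * (1 - γ)))⁻¹ ^ (if InformativePair d s a then 1 else 0)
      * mixKer d γ s a s' := by
  split_ifs with h
  · simpa using geomKer_le_mul_mixKer hd hγ0 hγ1 s a s'
  · simpa using geomKer_le_mixKer_of_not_informativePair hd hγ0.le hγ1.le h s'

open scoped Classical in
lemma inv_pow_mul_sum_geomKer_le_one [Fintype S] {act : S → Finset A}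
    (hd : ∀ i s a s', 0 ≤ d i s a s') (hstoch : ∀ s, ∀ a ∈ act s, ∀ i, ∑ s', d i s a s' = 1)
    {c : ℝ} (hc0 : 0 < c)
    (hc : ∀ s, ∀ a ∈ act s, InformativePair d s a → ∑ s', geomKer d s a s' ≤ c)
    {s : S} {a : A} (ha : a ∈ act s) :
    c⁻¹ ^ (if InformativePair d s a then 1 else 0) * ∑ s', geomKer d s a s' ≤ 1 := by
  split_ifs with h
  · rw [pow_one, inv_mul_le_one₀ hc0]
    exact hc s a ha h
  · rw [pow_zero, one_mul]
    exact sum_sqrt_mul_le_one (hd 0 s a) (hd 1 s a) (hstoch s a ha 0) (hstoch s a ha 1)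

lemma exists_sum_geomKer_le_lt_one [Fintype S] [Fintype A] {act : S → Finset A}
    (hd : ∀ i s a s', 0 ≤ d i s a s') (hstoch : ∀ s, ∀ a ∈ act s, ∀ i, ∑ s', d i s a s' = 1) :
    ∃ c, 0 < c ∧ c < 1 ∧
      ∀ s, ∀ a ∈ act s, InformativePair d s a → ∑ s', geomKer d s a s' ≤ c := by
  classical
  set X := insert (1 / 2 : ℝ)
    ((univ.filter fun p : S × A => p.2 ∈ act p.1 ∧ InformativePair d p.1 p.2).image
      fun p => ∑ s', geomKer d p.1 p.2 s')
  refine ⟨X.max' (insert_nonempty _ _),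
    (by norm_num : (0 : ℝ) < 1 / 2).trans_le (le_max' _ _ (mem_insert_self _ _)),
    (max'_lt_iff _ _).2 fun y hy => ?_, fun s a ha h => ?_⟩
  · rcases mem_insert.1 hy with rfl | hy
    · norm_num
    obtain ⟨⟨s, a⟩, hp, rfl⟩ := mem_image.1 hy
    obtain ⟨ha, hinf⟩ := (mem_filter.1 hp).2
    exact sum_sqrt_mul_lt_one (hd 0 s a) (hd 1 s a) (hstoch s a ha 0) (hstoch s a ha 1) hinf.1
  · refine le_max' _ _ (mem_insert_of_mem ?_)
    exact mem_image_of_mem _ (mem_filter.2 ⟨mem_univ (s, a), ha, h⟩)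

end TwoKernels

section HistoryBounds

variable {S A : Type} [Fintype S] [Fintype A] [DecidableEq S] {d : Fin 2 → S → A → S → ℝ}
  (init : S) (πf : (t : ℕ) → Hist S A t → A → ℝ)

lemma sqrt_histProb_mul_histProb (hd : ∀ i s a s', 0 ≤ d i s a s')
    (hπ : ∀ t h a, 0 ≤ πf t h a) {t : ℕ} (h : Hist S A t) :
    √(histProb init (d 0) πf t h * histProb init (d 1) πf t h)
      = histProb init (geomKer d) πf t h := by
  rw [Real.sqrt_eq_iff_mul_self_eq
    (mul_nonneg (histProb_nonneg _ _ _ (hd 0) hπ h) (histProb_nonneg _ _ _ (hd 1) hπ h))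
    (histProb_nonneg init (geomKer d) πf geomKer_nonneg hπ h)]
  simp only [histProb, mul_mul_mul_comm _ (∏ τ : Fin t, _), ← prod_mul_distrib]
  congr 1
  refine prod_congr rfl fun τ _ => ?_
  rw [mul_mul_mul_comm _ (geomKer d ..), geomKer_mul_self hd]
  ring

lemma BC_eq_sum_histProb_geomKer (hd : ∀ i s a s', 0 ≤ d i s a s')
    (hπ : ∀ t h a, 0 ≤ πf t h a) (t : ℕ) :
    BC init (d 0) (d 1) πf t = ∑ h : Hist S A t, histProb init (geomKer d) πf t h :=
  sum_congr rfl fun h _ => sqrt_histProb_mul_histProb init πf hd hπ h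

lemma histProb_geomKer_le_pow_count_mul (hd : ∀ i s a s', 0 ≤ d i s a s')
    (hπ : ∀ t h a, 0 ≤ πf t h a) {γ : ℝ} (hγ0 : 0 < γ) (hγ1 : γ < 1) {t : ℕ} (h : Hist S A t) :
    histProb init (geomKer d) πf t h ≤ (2 * √(γ * (1 - γ)))⁻¹ ^ h.count (InformativePair d)
      * histProb init (mixKer d γ) πf t h := by
  classical
  calc histProb init (geomKer d) πf t h
      ≤ (if h.1 0 = init then 1 else 0) * ∏ τ : Fin t,
          (2 * √(γ * (1 - γ)))⁻¹ ^ (if InformativePair d (h.1 τ.castSucc) (h.2 τ) then 1 else 0)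
            * (πf τ (prefixH h τ) (h.2 τ)
              * mixKer d γ (h.1 τ.castSucc) (h.2 τ) (h.1 τ.succ)) := by
        refine mul_le_mul_of_nonneg_left (prod_le_prod (fun τ _ => ?_) fun τ _ => ?_)
          (by positivity)
        · exact mul_nonneg (hπ ..) (geomKer_nonneg ..)
        · rw [mul_left_comm]
          exact mul_le_mul_of_nonneg_left (geomKer_le_pow_mul_mixKer hd hγ0 hγ1 ..) (hπ ..)
    _ = _ := by rw [prod_mul_distrib, prod_pow_eq_pow_sum, histProb, Hist.count]; ring

end HistoryBounds

section Sufficiency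

open scoped Classical

variable {S A : Type} [Fintype S] [Fintype A] [DecidableEq S] {d : Fin 2 → S → A → S → ℝ}
  {act : S → Finset A} {c : ℝ}

/-- Summed over the next state, an informative step multiplies `ν = √(P₀ P₁)` by at most `c` and
any other step by at most `1`, so the weighted sum does not increase with `t`. -/
theorem sum_histProb_geomKer_mul_inv_pow_count_le_one (hd : ∀ i s a s', 0 ≤ d i s a s')
    (hstoch : ∀ s, ∀ a ∈ act s, ∀ i, ∑ s', d i s a s' = 1) (hc0 : 0 < c)
    (hc : ∀ s, ∀ a ∈ act s, InformativePair d s a → ∑ s', geomKer d s a s' ≤ c)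
    (π : Policy S A act) (init : S) (t : ℕ) :
    ∑ h : Hist S A t, histProb init (geomKer d) π.p t h * c⁻¹ ^ h.count (InformativePair d)
      ≤ 1 := by
  induction t with
  | zero => simp [Hist.count, sum_histProb_zero]
  | succ t ih =>
    rw [Hist.sum_univ_succ]
    refine le_trans (sum_le_sum fun h _ => ?_) ih
    have hν := histProb_nonneg init (geomKer d) π.p geomKer_nonneg π.nonneg h
    simp only [histProb_snoc, Hist.count_snoc, pow_add]
    calc ∑ a, ∑ s, histProb init (geomKer d) π.p t h * (π.p t h a * geomKer d (lastState h) a s)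
          * (c⁻¹ ^ h.count (InformativePair d)
            * c⁻¹ ^ if InformativePair d (lastState h) a then 1 else 0)
        = histProb init (geomKer d) π.p t h * c⁻¹ ^ h.count (InformativePair d)
          * ∑ a, π.p t h a * (c⁻¹ ^ (if InformativePair d (lastState h) a then 1 else 0)
            * ∑ s, geomKer d (lastState h) a s) := by
          simp only [mul_sum]
          exact sum_congr rfl fun a _ => sum_congr rfl fun s _ => by ring
      _ ≤ histProb init (geomKer d) π.p t h * c⁻¹ ^ h.count (InformativePair d)
          * ∑ a, π.p t h a := by
          gcongr with a
          by_cases ha : a ∈ act (lastState h)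
          · exact mul_le_of_le_one_right (π.nonneg ..)
              (inv_pow_mul_sum_geomKer_le_one hd hstoch hc0 hc ha)
          · simp [π.zero_off t h a ha]
      _ = _ := by rw [π.sum_univ, mul_one]

lemma sum_histProb_geomKer_le_pow (hd : ∀ i s a s', 0 ≤ d i s a s')
    (hstoch : ∀ s, ∀ a ∈ act s, ∀ i, ∑ s', d i s a s' = 1) (hc0 : 0 < c) (hc1 : c ≤ 1)
    (hc : ∀ s, ∀ a ∈ act s, InformativePair d s a → ∑ s', geomKer d s a s' ≤ c)
    (π : Policy S A act) (init : S) (k t : ℕ) :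
    ∑ h ∈ univ.filter fun h : Hist S A t => k ≤ h.count (InformativePair d),
      histProb init (geomKer d) π.p t h ≤ c ^ k := by
  have hν := histProb_nonneg init (geomKer d) π.p geomKer_nonneg π.nonneg (t := t)
  calc ∑ h ∈ univ.filter fun h : Hist S A t => k ≤ h.count (InformativePair d),
        histProb init (geomKer d) π.p t h
      ≤ ∑ h ∈ univ.filter fun h : Hist S A t => k ≤ h.count (InformativePair d),
        histProb init (geomKer d) π.p t h * (c ^ k * c⁻¹ ^ h.count (InformativePair d)) := by
        refine sum_le_sum fun h hh => le_mul_of_one_le_right (hν h) ?_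
        rw [inv_pow, ← div_eq_mul_inv, one_le_div (by positivity)]
        exact pow_le_pow_of_le_one hc0.le hc1 (mem_filter.1 hh).2
    _ ≤ ∑ h, histProb init (geomKer d) π.p t h * (c ^ k * c⁻¹ ^ h.count (InformativePair d)) :=
        sum_le_sum_of_subset_of_nonneg (filter_subset _ _) fun h _ _ =>
          mul_nonneg (hν h) (by positivity)
    _ = c ^ k * ∑ h, histProb init (geomKer d) π.p t h * c⁻¹ ^ h.count (InformativePair d) := by
        rw [mul_sum]
        exact sum_congr rfl fun h _ => by ring
    _ ≤ c ^ k := mul_le_of_le_one_right (by positivity)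
        (sum_histProb_geomKer_mul_inv_pow_count_le_one hd hstoch hc0 hc π init t)

lemma BC_le_add_pow (hd : ∀ i s a s', 0 ≤ d i s a s')
    (hstoch : ∀ s, ∀ a ∈ act s, ∀ i, ∑ s', d i s a s' = 1) {γ : ℝ} (hγ0 : 0 < γ) (hγ1 : γ < 1)
    (hc0 : 0 < c) (hc1 : c ≤ 1)
    (hc : ∀ s, ∀ a ∈ act s, InformativePair d s a → ∑ s', geomKer d s a s' ≤ c)
    {π : Policy S A act} {init : S} {P : Measure (Traj S A)}
    (hP : IsInduced init (mixKer d γ) π.p P) (k t : ℕ) :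
    BC init (d 0) (d 1) π.p t
      ≤ (2 * √(γ * (1 - γ)))⁻¹ ^ k * (P {ω | (ω.take t).count (InformativePair d) < k ∧
          histProb init (geomKer d) π.p t (ω.take t) ≠ 0}).toReal + c ^ k := by
  have hQ := histProb_nonneg init _ π.p (mixKer_nonneg hd hγ0.le hγ1.le) π.nonneg (t := t)
  rw [BC_eq_sum_histProb_geomKer init π.p hd π.nonneg,
    hP.toReal_measure_setOf_take (mixKer_nonneg hd hγ0.le hγ1.le) π.nonneg
      fun h => h.count (InformativePair d) < k ∧ histProb init (geomKer d) π.p t h ≠ 0,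
    mul_sum, ← sum_filter_add_sum_filter_not univ fun h => h.count (InformativePair d) < k,
    ← sum_filter_ne_zero, filter_filter]
  refine add_le_add (sum_le_sum fun h hh => ?_) ?_
  · refine (histProb_geomKer_le_pow_count_mul init π.p hd π.nonneg hγ0 hγ1 h).trans ?_
    exact mul_le_mul_of_nonneg_right (pow_le_pow_right₀ (one_le_inv_two_mul_sqrt hγ0 hγ1)
      (mem_filter.1 hh).2.1.le) (hQ h)
  · simpa only [not_lt] using sum_histProb_geomKer_le_pow hd hstoch hc0 hc1 hc π init k t

theorem tendsto_BC_of_measure_eq_zero (hd : ∀ i s a s', 0 ≤ d i s a s')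
    (hstoch : ∀ s, ∀ a ∈ act s, ∀ i, ∑ s', d i s a s' = 1) {γ : ℝ} (hγ0 : 0 < γ) (hγ1 : γ < 1)
    {π : Policy S A act} {init : S} {P : Measure (Traj S A)}
    (hP : IsInduced init (mixKer d γ) π.p P)
    (hnull : ∀ k, P {ω | ∀ t, (ω.take t).count (InformativePair d) < k ∧
      histProb init (geomKer d) π.p t (ω.take t) ≠ 0} = 0) :
    Tendsto (fun t => BC init (d 0) (d 1) π.p t) atTop (𝓝 0) := by
  have := hP.1
  obtain ⟨c, hc0, hc1, hc⟩ := exists_sum_geomKer_le_lt_one hd hstoch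
  refine tendsto_zero_of_forall_le_mul_add (fun t => sum_nonneg fun h _ => Real.sqrt_nonneg _)
    (tendsto_pow_atTop_nhds_zero_of_lt_one hc0.le hc1) (fun k => ?_)
    (BC_le_add_pow hd hstoch hγ0 hγ1 hc0 hc1.le hc hP)
  have hanti : Antitone fun t => {ω : Traj S A | (ω.take t).count (InformativePair d) < k ∧
      histProb init (geomKer d) π.p t (ω.take t) ≠ 0} := by
    refine antitone_nat_of_succ_le fun t ω ⟨hk, hν⟩ => ⟨?_, ?_⟩
    · rw [Traj.take_succ, Hist.count_snoc] at hk
      omega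
    · rw [histProb_take_succ] at hν
      exact left_ne_zero_of_mul hν
  have hlim := tendsto_measure_iInter_atTop (fun t => (measurableSet_setOf_take (t := t)
    fun h => h.count (InformativePair d) < k ∧ histProb init (geomKer d) π.p t h ≠ 0
    ).nullMeasurableSet) hanti ⟨0, measure_ne_top P _⟩
  rw [Set.iInter_ofPred, hnull k] at hlim
  simpa [Function.comp_def] using (ENNReal.tendsto_toReal ENNReal.zero_ne_top).comp hlim

end Sufficiency

section Necessity

variable {S A : Type} [Fintype S] [Fintype A] [DecidableEq S] {d : Fin 2 → S → A → S → ℝ}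
  {act : S → Finset A} {π : Policy S A act} {init : S} {γ : ℝ}

lemma mul_toReal_measure_le_BC (hd : ∀ i s a s', 0 ≤ d i s a s') (hγ0 : 0 ≤ γ) (hγ1 : γ ≤ 1)
    {P : Measure (Traj S A)} (hP : IsInduced init (mixKer d γ) π.p P) (η : ℝ) (t : ℕ) :
    η * (P {ω | η * histProb init (mixKer d γ) π.p t (ω.take t)
      ≤ histProb init (geomKer d) π.p t (ω.take t)}).toReal ≤ BC init (d 0) (d 1) π.p t := by
  classical
  rw [hP.toReal_measure_setOf_take (mixKer_nonneg hd hγ0 hγ1) π.nonneg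
    fun h => η * histProb init (mixKer d γ) π.p t h ≤ histProb init (geomKer d) π.p t h,
    mul_sum, BC_eq_sum_histProb_geomKer init π.p hd π.nonneg]
  exact (sum_le_sum fun h hh => (mem_filter.1 hh).2).trans
    (sum_le_sum_of_subset_of_nonneg (filter_subset _ _) fun h _ _ =>
      histProb_nonneg init _ π.p geomKer_nonneg π.nonneg h)

/-- Along steps where the two kernels agree, `ν` and `Q` are multiplied by the same factor. -/
lemma mul_histProb_mixKer_take_le (hd : ∀ i s a s', 0 ≤ d i s a s') {ω : Traj S A} {η : ℝ}
    {T : ℕ} (hrows : ∀ n, T ≤ n → d 0 (ω n).1 (ω n).2 = d 1 (ω n).1 (ω n).2)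
    (hT : η * histProb init (mixKer d γ) π.p T (ω.take T)
      ≤ histProb init (geomKer d) π.p T (ω.take T)) (t : ℕ) (ht : T ≤ t) :
    η * histProb init (mixKer d γ) π.p t (ω.take t)
      ≤ histProb init (geomKer d) π.p t (ω.take t) := by
  induction t, ht using Nat.le_induction with
  | base => exact hT
  | succ t ht ih =>
    rw [histProb_take_succ, histProb_take_succ, ← geomKer_eq_mixKer_of_eq hd γ (hrows t ht),
      ← mul_assoc]
    exact mul_le_mul_of_nonneg_right ih (mul_nonneg (π.nonneg ..) (geomKer_nonneg ..))

lemma measure_setOf_eq_and_mul_le_eq_zero_of_tendsto_BC (hd : ∀ i s a s', 0 ≤ d i s a s')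
    (hγ0 : 0 ≤ γ) (hγ1 : γ ≤ 1) {P : Measure (Traj S A)} (hP : IsInduced init (mixKer d γ) π.p P)
    (hBC : Tendsto (fun t => BC init (d 0) (d 1) π.p t) atTop (𝓝 0)) (T : ℕ) {η : ℝ}
    (hη : 0 < η) :
    P {ω | (∀ n, T ≤ n → d 0 (ω n).1 (ω n).2 = d 1 (ω n).1 (ω n).2) ∧
      η * histProb init (mixKer d γ) π.p T (ω.take T)
        ≤ histProb init (geomKer d) π.p T (ω.take T)} = 0 := by
  have := hP.1
  set W := {ω : Traj S A | (∀ n, T ≤ n → d 0 (ω n).1 (ω n).2 = d 1 (ω n).1 (ω n).2) ∧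
      η * histProb init (mixKer d γ) π.p T (ω.take T)
        ≤ histProb init (geomKer d) π.p T (ω.take T)}
  have hle : ∀ t, T ≤ t → η * (P W).toReal ≤ BC init (d 0) (d 1) π.p t := fun t ht =>
    (mul_le_mul_of_nonneg_left (ENNReal.toReal_mono (measure_ne_top _ _) (measure_mono
      fun ω hω => mul_histProb_mixKer_take_le hd hω.1 hω.2 t ht)) hη.le).trans
      (mul_toReal_measure_le_BC hd hγ0 hγ1 hP η t)
  have hW : η * (P W).toReal ≤ 0 := ge_of_tendsto hBC (eventually_atTop.2 ⟨T, hle⟩)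
  have hW' : (P W).toReal = 0 := le_antisymm (by nlinarith) ENNReal.toReal_nonneg
  exact ((ENNReal.toReal_eq_zero_iff _).1 hW').resolve_right (measure_ne_top _ _)

theorem measure_setOf_eventually_eq_eq_zero_of_tendsto_BC (hd : ∀ i s a s', 0 ≤ d i s a s')
    (hγ0 : 0 ≤ γ) (hγ1 : γ ≤ 1) {P : Measure (Traj S A)} (hP : IsInduced init (mixKer d γ) π.p P)
    (hBC : Tendsto (fun t => BC init (d 0) (d 1) π.p t) atTop (𝓝 0)) :
    P {ω | ∃ T, (∀ n, T ≤ n → d 0 (ω n).1 (ω n).2 = d 1 (ω n).1 (ω n).2) ∧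
      histProb init (geomKer d) π.p T (ω.take T) ≠ 0} = 0 := by
  refine measure_mono_null (fun ω ⟨T, hrows, hν⟩ => ?_) (measure_iUnion_null fun T =>
    measure_iUnion_null fun m : ℕ => measure_setOf_eq_and_mul_le_eq_zero_of_tendsto_BC hd hγ0 hγ1
      hP hBC T (Nat.one_div_pos_of_nat (n := m)))
  have hν' := (histProb_nonneg init _ π.p geomKer_nonneg π.nonneg (ω.take T)).lt_of_ne' hν
  obtain ⟨m, hm⟩ := exists_nat_ge (histProb init (mixKer d γ) π.p T (ω.take T)
    / histProb init (geomKer d) π.p T (ω.take T))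
  refine Set.mem_iUnion₂.2 ⟨T, m, hrows, ?_⟩
  rw [div_le_iff₀ hν'] at hm
  rw [one_div, inv_mul_le_iff₀ (by positivity)]
  linarith

end Necessity

section KernelPairs

variable {S A : Type} {d : Fin 2 → S → A → S → ℝ} {s : S} {a : A}

lemma eq_of_not_informativePair (h : ¬InformativePair d s a) {s' : S} (h0 : 0 < d 0 s a s')
    (h1 : 0 < d 1 s a s') : d 0 s a = d 1 s a :=
  by_contra fun hne => h ⟨hne, s', h0, h1⟩

lemma eq_of_not_revealingPair_of_not_informativePair (hrev : ¬RevealingPair d s a)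
    (hinf : ¬InformativePair d s a) : d 0 s a = d 1 s a := by
  obtain ⟨s', h0, h1⟩ := not_forall_not.1 hrev
  exact eq_of_not_informativePair hinf h0 h1

end KernelPairs

section PreprocessedKernel

variable {S A : Type} [Fintype S] [DecidableEq S] {δ : Fin 2 → S → A → S → ℝ}

lemma δp_nonneg (hδ0 : ∀ i s a s', 0 ≤ δ i s a s') (i : Fin 2) (sp : S ⊕ Fin 2)
    (ap : A ⊕ Fin 2) (s' : S ⊕ Fin 2) : 0 ≤ δp δ i sp ap s' := by
  rcases sp with s | j <;> rcases ap with a | j' <;> rcases s' with s' | j'' <;>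
    simp only [δp] <;> (try split_ifs) <;>
    first | positivity | exact hδ0 .. | exact sum_nonneg fun _ _ => hδ0 ..

lemma geomKer_δp_inl_inr (s : S) (ap : A ⊕ Fin 2) (j : Fin 2) :
    geomKer (δp δ) (Sum.inl s) ap (Sum.inr j) = 0 := by
  rcases ap with a | j' <;> fin_cases j <;> simp [geomKer, δp]

lemma δp_inl_eq_zero_iff (hδ0 : ∀ i s a s', 0 ≤ δ i s a s') (s : S) (a : A) (s' : S) :
    δp δ 0 (Sum.inl s) (Sum.inl a) (Sum.inl s') = 0 ↔
      δp δ 1 (Sum.inl s) (Sum.inl a) (Sum.inl s') = 0 := by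
  have h0 := hδ0 0 s a s'
  have h1 := hδ0 1 s a s'
  simp only [δp, sub_zero, sub_self]
  split_ifs with hrev hinf
  · exact Iff.rfl
  all_goals first
    | constructor <;> intro <;> linarith
    | rw [eq_of_not_revealingPair_of_not_informativePair hrev hinf]

lemma δp_pos_of_mixKer_ne_zero (hδ0 : ∀ i s a s', 0 ≤ δ i s a s') {γ : ℝ} {s : S} {a : A}
    {s' : S} (h : mixKer (δp δ) γ (Sum.inl s) (Sum.inl a) (Sum.inl s') ≠ 0) :
    0 < δp δ 0 (Sum.inl s) (Sum.inl a) (Sum.inl s') ∧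
      0 < δp δ 1 (Sum.inl s) (Sum.inl a) (Sum.inl s') := by
  have hiff := δp_inl_eq_zero_iff hδ0 s a s'
  have h0 : δp δ 0 (Sum.inl s) (Sum.inl a) (Sum.inl s') ≠ 0 := fun h0 =>
    h (by simp [mixKer, h0, hiff.1 h0])
  exact ⟨(δp_nonneg hδ0 ..).lt_of_ne' h0, (δp_nonneg hδ0 ..).lt_of_ne' (hiff.not.1 h0)⟩

end PreprocessedKernel

section PreprocessedActions

variable {S A : Type} [DecidableEq A] {act : S → Finset A} {δ : Fin 2 → S → A → S → ℝ}
  {ra : S → A}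

lemma exists_eq_inl_of_mem_actp {s : S} {ap : A ⊕ Fin 2} (hap : ap ∈ actp act δ ra (Sum.inl s)) :
    ∃ a, ap = Sum.inl a := by
  simp only [actp] at hap
  split_ifs at hap
  · exact ⟨ra s, mem_singleton.1 hap⟩
  · obtain ⟨a, -, rfl⟩ := mem_image.1 hap
    exact ⟨a, rfl⟩

lemma sum_δp_eq_one [Fintype S] [DecidableEq S] (hδ1 : ∀ i s, ∀ a ∈ act s, ∑ s', δ i s a s' = 1)
    (hra : ∀ s, RevealingState act δ s → ra s ∈ act s ∧ RevealingPair δ s (ra s))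
    (sp : S ⊕ Fin 2) : ∀ ap ∈ actp act δ ra sp, ∀ i, ∑ s', δp δ i sp ap s' = 1 := by
  intro ap hap i
  rcases sp with s | j
  · by_cases hrs : RevealingState act δ s
    · obtain rfl : ap = Sum.inl (ra s) := by simpa [actp, hrs] using hap
      fin_cases i <;> simp [δp, Fintype.sum_sum_type, (hra s hrs).2]
    · obtain ⟨a, ha, rfl⟩ : ∃ a ∈ act s, Sum.inl a = ap := by simpa [actp, hrs] using hap
      have hrev : ¬RevealingPair δ s a := fun h => hrs ⟨a, ha, h⟩
      by_cases hinf : InformativePair δ s a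
      · simp only [δp, Fintype.sum_sum_type, hrev, hinf, if_false, if_true, sum_ite_eq',
          mem_univ]
        rw [← sum_filter, sum_filter_add_sum_filter_not, hδ1 i s a ha]
      · simp [δp, Fintype.sum_sum_type, hrev, hinf, hδ1 i s a ha]
  · obtain rfl : ap = Sum.inr j := by simpa [actp] using hap
    simp [δp]

end PreprocessedActions

section PreprocessedTrajectories

variable {S A : Type} [Fintype S] [Fintype A] [DecidableEq S] [DecidableEq A]
  {act : S → Finset A} {δ : Fin 2 → S → A → S → ℝ} {ra : S → A}
  {π : Policy (S ⊕ Fin 2) (A ⊕ Fin 2) (actp act δ ra)} {init : S}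
  {ω : Traj (S ⊕ Fin 2) (A ⊕ Fin 2)}

open scoped Classical in
lemma not_nonempty_infOften_inter_ISAp_of_count_lt {k : ℕ}
    (hω : ∀ t, (ω.take t).count (InformativePair (δp δ)) < k ∧
      histProb (Sum.inl init) (geomKer (δp δ)) π.p t (ω.take t) ≠ 0) :
    ¬(InfOften ω ∩ ISAp act δ ra).Nonempty := by
  have hν : ∀ t, histProb (Sum.inl init) (geomKer (δp δ)) π.p t (ω.take t) ≠ 0 :=
    fun t => (hω t).2
  have hleft : ∀ n, (ω n).1 ∈ Set.range Sum.inl := by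
    refine fun n => mem_of_forall_histProb_take_ne_zero _ _ _ ω ?_ hν (n := 0) ?_ n n.zero_le
    · rintro _ ⟨s, rfl⟩ a (_ | j) hs'
      · exact absurd ⟨_, rfl⟩ hs'
      · exact geomKer_δp_inl_inr s a j
    · exact ⟨init, ((forall_histProb_take_ne_zero_iff _ _ _ ω).1 hν).1.symm⟩
  rintro ⟨p, hp, ⟨-, hinf⟩ | ⟨j, rfl⟩⟩
  · have hfreq : {n | InformativePair (δp δ) (ω n).1 (ω n).2}.Infinite :=
      hp.mono fun n (hn : ω n = p) => by rw [Set.mem_ofPred_eq, hn]; exact hinf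
    have hk := (hω (Nat.nth (fun n => InformativePair (δp δ) (ω n).1 (ω n).2) k)).1
    rw [Traj.count_take, Nat.count_nth_of_infinite hfreq] at hk
    exact lt_irrefl k hk
  · obtain ⟨n, hn : ω n = (Sum.inr j, Sum.inr j)⟩ := hp.nonempty
    obtain ⟨s, hs⟩ := hleft n
    simp [hn] at hs

variable {γ : ℝ}

lemma mem_infOften_of_fst_eq_inr
    (hQ : ∀ t, histProb (Sum.inl init) (mixKer (δp δ) γ) π.p t (ω.take t) ≠ 0) {n : ℕ}
    {j : Fin 2} (hn : (ω n).1 = Sum.inr j) : (Sum.inr j, Sum.inr j) ∈ InfOften ω := by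
  have hstay := mem_of_forall_histProb_take_ne_zero _ _ _ ω (L := {Sum.inr j}) ?_ hQ hn
  · refine (Set.Ici_infinite n).mono fun m (hm : n ≤ m) => ?_
    have hs : (ω m).1 = Sum.inr j := hstay m hm
    have ha := π.mem_act_of_ne_zero
      (((forall_histProb_take_ne_zero_iff _ _ _ ω).1 hQ).2 m).1
    rw [Traj.lastState_take, hs] at ha
    exact Prod.ext hs (by simpa [actp] using ha)
  · rintro _ rfl a s' hs'
    simp [mixKer, δp, Set.mem_singleton_iff.not.1 hs']

lemma δp_pos_of_forall_histProb_take_ne_zero (hδ0 : ∀ i s a s', 0 ≤ δ i s a s')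
    (hQ : ∀ t, histProb (Sum.inl init) (mixKer (δp δ) γ) π.p t (ω.take t) ≠ 0)
    (hleft : ∀ n, ∃ s, (ω n).1 = Sum.inl s) (n : ℕ) :
    0 < δp δ 0 (ω n).1 (ω n).2 (ω (n + 1)).1 ∧ 0 < δp δ 1 (ω n).1 (ω n).2 (ω (n + 1)).1 := by
  have hstep := ((forall_histProb_take_ne_zero_iff _ _ _ ω).1 hQ).2 n
  obtain ⟨s, hs⟩ := hleft n
  obtain ⟨s', hs'⟩ := hleft (n + 1)
  have ha := π.mem_act_of_ne_zero hstep.1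
  rw [Traj.lastState_take, hs] at ha
  obtain ⟨a, ha⟩ := exists_eq_inl_of_mem_actp ha
  have hm := hstep.2
  rw [hs, ha, hs'] at hm ⊢
  exact δp_pos_of_mixKer_ne_zero hδ0 hm

lemma exists_eventually_eq_of_not_nonempty_infOften_inter_ISAp
    (hδ0 : ∀ i s a s', 0 ≤ δ i s a s')
    (hQ : ∀ t, histProb (Sum.inl init) (mixKer (δp δ) γ) π.p t (ω.take t) ≠ 0)
    (hE : ¬(InfOften ω ∩ ISAp act δ ra).Nonempty) :
    ∃ T, (∀ n, T ≤ n → δp δ 0 (ω n).1 (ω n).2 = δp δ 1 (ω n).1 (ω n).2) ∧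
      histProb (Sum.inl init) (geomKer (δp δ)) π.p T (ω.take T) ≠ 0 := by
  obtain ⟨h0, hstep⟩ := (forall_histProb_take_ne_zero_iff _ _ _ ω).1 hQ
  have hleft : ∀ n, ∃ s, (ω n).1 = Sum.inl s := fun n => by
    rcases hn : (ω n).1 with s | j
    · exact ⟨s, rfl⟩
    · exact absurd ⟨_, mem_infOften_of_fst_eq_inr hQ hn, Or.inr ⟨j, rfl⟩⟩ hE
  have hpos := δp_pos_of_forall_histProb_take_ne_zero hδ0 hQ hleft
  obtain ⟨T, hT⟩ := eventually_atTop.1 (ω.eventually_notMem_of_not_nonempty_infOften_inter hE)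
  refine ⟨T, fun n hn => ?_, (forall_histProb_take_ne_zero_iff _ _ _ ω).2
    ⟨h0, fun n => ⟨(hstep n).1, Real.sqrt_ne_zero'.2 (mul_pos (hpos n).1 (hpos n).2)⟩⟩ T⟩
  by_contra hne
  exact hT n hn (Or.inl ⟨π.mem_act_of_ne_zero (hstep n).1, hne, _, hpos n⟩)

end PreprocessedTrajectories

theorem APD_iff_induced_measure_infOften_ISA_general
    {S A : Type} [Fintype S] [Fintype A] [DecidableEq S] [DecidableEq A]
    (act : S → Finset A) (init : S)
    (δ : Fin 2 → S → A → S → ℝ)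
    (hδ0 : ∀ i s a s', 0 ≤ δ i s a s')
    (hδ1 : ∀ i s, ∀ a ∈ act s, ∑ s', δ i s a s' = 1)
    (ra : S → A)
    (hra : ∀ s, RevealingState act δ s → ra s ∈ act s ∧ RevealingPair δ s (ra s))
    (γ : ℝ) (hγ0 : 0 < γ) (hγ1 : γ < 1)
    (π : Policy (S ⊕ Fin 2) (A ⊕ Fin 2) (actp act δ ra))
    (PI : MeasureTheory.Measure (Traj (S ⊕ Fin 2) (A ⊕ Fin 2)))
    (hPI : IsInduced (Sum.inl init)
      (fun sp ap s'p => γ * δp δ 0 sp ap s'p + (1 - γ) * δp δ 1 sp ap s'p) π.p PI) :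
    Tendsto (fun t => BC (Sum.inl init) (δp δ 0) (δp δ 1) π.p t) atTop (nhds 0)
      ↔ PI {ω | (InfOften ω ∩ ISAp act δ ra).Nonempty} = 1 := by
  have hP : IsInduced (Sum.inl init) (mixKer (δp δ) γ) π.p PI := hPI
  have := hPI.1
  have hd := δp_nonneg hδ0
  rw [← prob_compl_eq_zero_iff (measurableSet_setOf_infOften_inter_nonempty _)]
  constructor
  · intro hBC
    refine measure_mono_null (fun ω hω => ?_) (measure_union_null
      hP.measure_setOf_exists_histProb_take_eq_zero
      (measure_setOf_eventually_eq_eq_zero_of_tendsto_BC hd hγ0.le hγ1.le hP hBC))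
    by_cases hQ : ∀ t, histProb (Sum.inl init) (mixKer (δp δ) γ) π.p t (ω.take t) ≠ 0
    · exact Or.inr (exists_eventually_eq_of_not_nonempty_infOften_inter_ISAp hδ0 hQ hω)
    · exact Or.inl (not_forall_not.1 hQ)
  · exact fun hE => tendsto_BC_of_measure_eq_zero hd (sum_δp_eq_one hδ1 hra) hγ0 hγ1 hP
      fun k => measure_mono_null (fun ω hω => not_nonempty_infOften_inter_ISAp_of_count_lt hω) hE

/-- **Necessary and sufficient condition for asymptotic perfect detection of binary MMDPs.**
Let `M` be a binary MMDP given by `(act, init, δ 0, δ 1)`, `M^p = {M₁^p, M₂^p}` its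
preprocessed MMDP (with chosen revealing actions `ra`), and `M^I` any of its informative
MDPs (kernel `δ^I = γ·δ₁^p + (1−γ)·δ₂^p`, `γ ∈ (0,1)`).  A policy `π` achieves asymptotic
perfect detection for `M` — equivalently for `M^p`, i.e. the Bhattacharyya coefficient
between `M₁^p` and `M₂^p` under `π` tends to `0` — if and only if
`P_I^π({h : inf(h) ∩ ISA^p ≠ ∅}) = 1`, where `P_I^π` is the measure on infinite histories
induced from `s_init` by `π` and `δ^I`. -/
theorem APD_iff_induced_measure_infOften_ISA
    {S A : Type} [Fintype S] [Fintype A] [DecidableEq S] [DecidableEq A]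
    (act : S → Finset A) (hact : ∀ s, (act s).Nonempty) (init : S)
    (δ : Fin 2 → S → A → S → ℝ)
    (hδ0 : ∀ i s a s', 0 ≤ δ i s a s')
    (hδ1 : ∀ i s, ∀ a ∈ act s, ∑ s', δ i s a s' = 1)
    (ra : S → A)
    (hra : ∀ s, RevealingState act δ s → ra s ∈ act s ∧ RevealingPair δ s (ra s))
    (γ : ℝ) (hγ0 : 0 < γ) (hγ1 : γ < 1)
    (π : Policy (S ⊕ Fin 2) (A ⊕ Fin 2) (actp act δ ra))
    (PI : MeasureTheory.Measure (Traj (S ⊕ Fin 2) (A ⊕ Fin 2)))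
    (hPI : IsInduced (Sum.inl init)
      (fun sp ap s'p => γ * δp δ 0 sp ap s'p + (1 - γ) * δp δ 1 sp ap s'p) π.p PI) :
    Tendsto (fun t => BC (Sum.inl init) (δp δ 0) (δp δ 1) π.p t) atTop (nhds 0)
      ↔ PI {ω | (InfOften ω ∩ ISAp act δ ra).Nonempty} = 1 :=
  APD_iff_induced_measure_infOften_ISA_general act init δ hδ0 hδ1 ra hra γ hγ0 hγ1 π PI hPI
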